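/- Let F be a field and Γ_F = SL₂(F[t,t⁻¹]) with δ = (D, D⁻¹) ∈ SL₂(F(t)) × SL₂(F(t)) where D = diag(t, t⁻¹), and Γ_F embedded diagonally. Then for every L there are only finitely many n ∈ ℕ for which there exists M ∈ Γ_F such that all entries of M·Dⁿ have ν_∞ ≥ L and all entries of M·D⁻ⁿ have ν₀ ≥ L. In particular, any infinite subset of {Γ_F·δⁿ : n ∈ ℕ} is unbounded in the quotient Γ_F \ (SL₂(F(t)) × SL₂(F(t))) with the metric induced by the valuations ν_∞ and ν₀ on the two factors. -/

import Mathlib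

/-! The entries of the first column of `M·D^{±n}` are `p·t^{±n}` with `p` a Laurent polynomial.
For `p ≠ 0` the lowest exponent of `p` is at most its highest one, i.e. `ν₀ p ≤ -ν_∞ p`, so the
two bounds `ν_∞(p tⁿ) ≥ L` and `ν₀(p t⁻ⁿ) ≥ L` add up to `2L ≤ -2n`. Hence for `n > -L` the first
column of `M` vanishes, which contradicts `det M = 1`. -/

open RatFunc Polynomial

/- The valuation at infinity on `F(t)`: `ν_∞(p/q) = deg q - deg p`, with `ν_∞ 0 = ⊤`. -/
open Classical in
noncomputable def nuInf {F : Type*} [Field F] (x : RatFunc F) : WithTop ℤ :=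
  if x = 0 then ⊤ else (-(x.intDegree) : ℤ)

/- The valuation at zero on `F(t)`: the order of vanishing at `t = 0`, with `ν₀ 0 = ⊤`. -/
open Classical in
noncomputable def nuZero {F : Type*} [Field F] (x : RatFunc F) : WithTop ℤ :=
  if x = 0 then ⊤
  else ((x.num.rootMultiplicity 0 : ℤ) - (x.denom.rootMultiplicity 0 : ℤ) : ℤ)

open Matrix
open scoped MatrixGroups

set_option synthInstance.maxHeartbeats 1000000

/-- The canonical embedding of the Laurent polynomial ring `F[t,t⁻¹]` into the rational
function field `F(t)`, sending `T` to `X`. -/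
noncomputable def laurentToRatFunc (F : Type*) [Field F] :
    LaurentPolynomial F →ₐ[F] RatFunc F :=
  (AddMonoidAlgebra.lift F (RatFunc F) ℤ)
    ((Units.coeHom (RatFunc F)).comp
      ((zpowersHom (RatFunc F)ˣ) (Units.mk0 RatFunc.X RatFunc.X_ne_zero)))

/-- The subgroup `SL₂(F[t,t⁻¹])` of `SL₂(F(t))`. -/
noncomputable def laurentSL2 (F : Type*) [Field F] : Subgroup (SL(2, RatFunc F)) :=
  (Matrix.SpecialLinearGroup.map (laurentToRatFunc F).toRingHom).range

/-- The diagonal matrix `diag(tᵏ, t⁻ᵏ)` over `F(t)`. -/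
noncomputable def diagT (F : Type*) [Field F] (k : ℤ) :
    Matrix (Fin 2) (Fin 2) (RatFunc F) :=
  !![RatFunc.X ^ k, 0; 0, RatFunc.X ^ (-k)]

section Valuations

variable {F : Type*} [Field F]

noncomputable def ordZero (x : RatFunc F) : ℤ :=
  (x.num.rootMultiplicity 0 : ℤ) - (x.denom.rootMultiplicity 0 : ℤ)

lemma nuZero_of_ne_zero {x : RatFunc F} (hx : x ≠ 0) : nuZero x = ordZero x := by
  simp [nuZero, ordZero, hx]

lemma nuInf_of_ne_zero {x : RatFunc F} (hx : x ≠ 0) :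
    nuInf x = ((-x.intDegree : ℤ) : WithTop ℤ) := by
  simp [nuInf, hx]

lemma ordZero_mul {x y : RatFunc F} (hx : x ≠ 0) (hy : y ≠ 0) :
    ordZero (x * y) = ordZero x + ordZero y := by
  have key := congrArg (rootMultiplicity 0) (RatFunc.num_denom_mul x y)
  have hden : x.denom * y.denom ≠ 0 := mul_ne_zero x.denom_ne_zero y.denom_ne_zero
  have hnum : x.num * y.num ≠ 0 := mul_ne_zero (num_ne_zero hx) (num_ne_zero hy)
  rw [rootMultiplicity_mul (mul_ne_zero (num_ne_zero (mul_ne_zero hx hy)) hden),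
    rootMultiplicity_mul (mul_ne_zero hnum (x * y).denom_ne_zero),
    rootMultiplicity_mul hden, rootMultiplicity_mul hnum] at key
  unfold ordZero
  omega

lemma ordZero_algebraMap (q : F[X]) :
    ordZero (algebraMap F[X] (RatFunc F) q) = q.rootMultiplicity 0 := by
  simp [ordZero]

lemma ordZero_X_zpow (k : ℤ) : ordZero (RatFunc.X ^ k : RatFunc F) = k := by
  have hpow (n : ℕ) : ordZero (RatFunc.X ^ n : RatFunc F) = n := by
    rw [← RatFunc.algebraMap_X, ← map_pow, ordZero_algebraMap, ← sub_zero Polynomial.X,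
      ← C_0, rootMultiplicity_X_sub_C_pow]
  obtain ⟨n, rfl | rfl⟩ := Int.eq_nat_or_neg k
  · simpa using hpow n
  · have hX : (RatFunc.X : RatFunc F) ≠ 0 := RatFunc.X_ne_zero
    have h := ordZero_mul (zpow_ne_zero (n : ℤ) hX) (zpow_ne_zero (-n : ℤ) hX)
    rw [← zpow_add₀ hX, add_neg_cancel, zpow_zero, ← map_one (algebraMap F[X] (RatFunc F)),
      ← C_1, ordZero_algebraMap, rootMultiplicity_C, zpow_natCast, hpow] at h
    omega

lemma intDegree_X_zpow (k : ℤ) : (RatFunc.X ^ k : RatFunc F).intDegree = k := by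
  obtain ⟨n, rfl | rfl⟩ := Int.eq_nat_or_neg k <;>
  simp [← RatFunc.algebraMap_X, ← map_pow]

end Valuations

lemma Polynomial.rootMultiplicity_le_natDegree {R : Type*} [CommRing R] [IsDomain R]
    (p : R[X]) (a : R) : p.rootMultiplicity a ≤ p.natDegree := by
  classical
  exact count_roots (a := a) p ▸ (Multiset.count_le_card a p.roots).trans (card_roots' p)

section Laurent

variable {F : Type*} [Field F]

lemma laurentToRatFunc_T (k : ℤ) :
    laurentToRatFunc F (LaurentPolynomial.T k) = RatFunc.X ^ k := by
  rw [laurentToRatFunc, LaurentPolynomial.T, AddMonoidAlgebra.lift_single]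
  simp

lemma laurentToRatFunc_toLaurent (q : F[X]) :
    laurentToRatFunc F q.toLaurent = algebraMap F[X] (RatFunc F) q := by
  have h : (laurentToRatFunc F).comp toLaurentAlg = IsScalarTower.toAlgHom F F[X] (RatFunc F) :=
    algHom_ext <| by simp [laurentToRatFunc_T, RatFunc.algebraMap_X]
  simpa [toLaurentAlg_apply] using AlgHom.congr_fun h q

lemma ordZero_le_intDegree_laurentToRatFunc {p : LaurentPolynomial F}
    (hp : laurentToRatFunc F p ≠ 0) :
    ordZero (laurentToRatFunc F p) ≤ (laurentToRatFunc F p).intDegree := by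
  obtain ⟨d, q, hq⟩ := p.exists_T_pow
  have hX : (RatFunc.X : RatFunc F) ^ (d : ℤ) ≠ 0 := zpow_ne_zero _ RatFunc.X_ne_zero
  have hqp : algebraMap F[X] (RatFunc F) q = laurentToRatFunc F p * RatFunc.X ^ (d : ℤ) := by
    rw [← laurentToRatFunc_toLaurent, hq, map_mul, laurentToRatFunc_T]
  have hord := congrArg ordZero hqp
  have hdeg := congrArg RatFunc.intDegree hqp
  rw [ordZero_algebraMap, ordZero_mul hp hX, ordZero_X_zpow] at hord
  rw [RatFunc.intDegree_polynomial, RatFunc.intDegree_mul hp hX, intDegree_X_zpow] at hdeg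
  have := q.rootMultiplicity_le_natDegree 0
  omega

lemma laurentToRatFunc_eq_zero_of_le_nuInf_of_le_nuZero {p : LaurentPolynomial F} {n : ℕ} {L : ℤ}
    (hn : 0 < L + n) (hInf : (L : WithTop ℤ) ≤ nuInf (laurentToRatFunc F p * RatFunc.X ^ (n : ℤ)))
    (hZero : (L : WithTop ℤ) ≤ nuZero (laurentToRatFunc F p * RatFunc.X ^ (-n : ℤ))) :
    laurentToRatFunc F p = 0 := by
  by_contra hp
  have hX (k : ℤ) : (RatFunc.X : RatFunc F) ^ k ≠ 0 := zpow_ne_zero _ RatFunc.X_ne_zero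
  rw [nuInf_of_ne_zero (mul_ne_zero hp (hX _)), RatFunc.intDegree_mul hp (hX _),
    intDegree_X_zpow, WithTop.coe_le_coe] at hInf
  rw [nuZero_of_ne_zero (mul_ne_zero hp (hX _)), ordZero_mul hp (hX _), ordZero_X_zpow,
    WithTop.coe_le_coe] at hZero
  have := ordZero_le_intDegree_laurentToRatFunc hp
  omega

end Laurent

lemma mul_diagT_apply_zero {F : Type*} [Field F] (A : Matrix (Fin 2) (Fin 2) (RatFunc F))
    (k : ℤ) (i : Fin 2) : (A * diagT F k) i 0 = A i 0 * RatFunc.X ^ k := by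
  simp [diagT, Matrix.mul_apply, Fin.sum_univ_two]

lemma natCast_le_neg_of_bounded {F : Type*} [Field F] {L : ℤ} {n : ℕ}
    (h : ∃ M ∈ laurentSL2 F,
      (∀ i j, (L : WithTop ℤ) ≤ nuInf (((M : SL(2, RatFunc F)).1 * diagT F n) i j)) ∧
      (∀ i j, (L : WithTop ℤ) ≤ nuZero (((M : SL(2, RatFunc F)).1 * diagT F (-n)) i j))) :
    (n : ℤ) ≤ -L := by
  obtain ⟨_, ⟨N, rfl⟩, hInf, hZero⟩ := h
  by_contra! hn
  have hcol (i : Fin 2) : laurentToRatFunc F (N i 0) = 0 := by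
    refine laurentToRatFunc_eq_zero_of_le_nuInf_of_le_nuZero (n := n) (L := L) (by omega) ?_ ?_
    · simpa [mul_diagT_apply_zero] using hInf i 0
    · simpa [mul_diagT_apply_zero] using hZero i 0
  have hdet := (SpecialLinearGroup.map (laurentToRatFunc F).toRingHom N).det_coe
  rw [Matrix.det_fin_two] at hdet
  simp [hcol] at hdet

/-- For every `L` there are only finitely many `n` for which some `M ∈ SL₂(F[t,t⁻¹])` makes all
entries of `M·Dⁿ` have `ν_∞ ≥ L` and all entries of `M·D⁻ⁿ` have `ν₀ ≥ L`; consequently any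
infinite subset of `{Γ_F·δⁿ}` is unbounded in the quotient (boundedness being expressed by a
uniform lower bound `L` on the valuations of entries). -/
theorem stmt_12 {F : Type*} [Field F] :
    (∀ L : ℤ, {n : ℕ | ∃ M ∈ laurentSL2 F,
      (∀ i j, (L : WithTop ℤ) ≤ nuInf (((M : SL(2, RatFunc F)).1 * diagT F n) i j)) ∧
      (∀ i j, (L : WithTop ℤ) ≤ nuZero (((M : SL(2, RatFunc F)).1 * diagT F (-n)) i j))}.Finite) ∧
    (∀ S : Set ℕ, S.Infinite →
      ¬ ∃ L : ℤ, ∀ n ∈ S, ∃ M ∈ laurentSL2 F,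
        (∀ i j, (L : WithTop ℤ) ≤ nuInf (((M : SL(2, RatFunc F)).1 * diagT F n) i j)) ∧
        (∀ i j, (L : WithTop ℤ) ≤ nuZero (((M : SL(2, RatFunc F)).1 * diagT F (-n)) i j))) := by
  have hfinite (L : ℤ) : {n : ℕ | ∃ M ∈ laurentSL2 F,
      (∀ i j, (L : WithTop ℤ) ≤ nuInf (((M : SL(2, RatFunc F)).1 * diagT F n) i j)) ∧
      (∀ i j, (L : WithTop ℤ) ≤ nuZero (((M : SL(2, RatFunc F)).1 * diagT F (-n)) i j))}.Finite :=
    (Set.finite_Iic (-L).toNat).subset fun n hn => by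
      have := natCast_le_neg_of_bounded hn
      simp only [Set.mem_Iic]
      omega
  exact ⟨hfinite, fun S hS ⟨L, hL⟩ => hS ((hfinite L).subset hL)⟩
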